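/- arXiv:1209.4375 — 2 statements merged into one kernel-verified Lean document; each statement's English description precedes it below -/
import Mathlib

section
/- Let E be a directed graph, K a field, and z a nonzero central element of KE whose Peirce decomposition has the form z = ku + hv + Σ_{w ≠ u,v} z_w, where u ≠ v are vertices, k, h are nonzero scalars in K, and z_w ∈ wAw for the remaining vertices w. If u and v are connected, then k = h. -/
/-! Basic infrastructure: directed graphs and their path algebras.

The path algebra `KE` is realized as the non-unital subalgebra generated by the
(images of the) vertices and edges inside the unital algebra `PA K E`, which is the
quotient of the free algebra on vertices and edges by the usual path-algebra
relations (vertices are orthogonal idempotents acting as local units on edges).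
Words of composable edges are exactly the paths, so `KE` has the paths as a basis. -/

/-- A directed graph `E = (E⁰, E¹, s, r)`. -/
structure DirGraph : Type 1 where
  V : Type
  Edge : Type
  s : Edge → V
  r : Edge → V

/-- A (non-unital, possibly non-closed) subset `S` of an algebra is *prime* if it is nonzero
and `a S b = 0` implies `a = 0` or `b = 0` for `a, b ∈ S`. -/
def IsPrimeSet {A : Type} [NonUnitalNonAssocSemiring A] (S : Set A) : Prop :=
  (∃ a ∈ S, a ≠ 0) ∧ ∀ a ∈ S, ∀ b ∈ S, (∀ x ∈ S, a * x * b = 0) → a = 0 ∨ b = 0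

/-- `J` is a two-sided ideal of the (possibly non-unital) subalgebra with carrier `S`. -/
def IsIdealOf (K : Type) [Field K] {A : Type} [Ring A] [Algebra K A] (S J : Set A) : Prop :=
  J ⊆ S ∧ (0 : A) ∈ J ∧ (∀ x ∈ J, ∀ y ∈ J, x + y ∈ J) ∧
    (∀ k : K, ∀ x ∈ J, k • x ∈ J) ∧ (∀ a ∈ S, ∀ x ∈ J, a * x ∈ J ∧ x * a ∈ J)

namespace DirGraph

/-- Generators of the path algebra: vertices and edges. -/
abbrev Gen (E : DirGraph) : Type := E.V ⊕ E.Edge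

variable (K : Type) [Field K] (E : DirGraph)

/-- The defining relations of the path algebra: vertices are orthogonal idempotents,
`s(e)·e = e`, `e·r(e) = e`, and all other vertex-edge products vanish. -/
inductive PathRel : FreeAlgebra K E.Gen → FreeAlgebra K E.Gen → Prop
  | vv_eq (u : E.V) :
      PathRel (FreeAlgebra.ι K (Sum.inl u) * FreeAlgebra.ι K (Sum.inl u))
        (FreeAlgebra.ι K (Sum.inl u))
  | vv_ne (u v : E.V) : u ≠ v →
      PathRel (FreeAlgebra.ι K (Sum.inl u) * FreeAlgebra.ι K (Sum.inl v)) 0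
  | ve_eq (e : E.Edge) :
      PathRel (FreeAlgebra.ι K (Sum.inl (E.s e)) * FreeAlgebra.ι K (Sum.inr e))
        (FreeAlgebra.ι K (Sum.inr e))
  | ve_ne (u : E.V) (e : E.Edge) : E.s e ≠ u →
      PathRel (FreeAlgebra.ι K (Sum.inl u) * FreeAlgebra.ι K (Sum.inr e)) 0
  | ev_eq (e : E.Edge) :
      PathRel (FreeAlgebra.ι K (Sum.inr e) * FreeAlgebra.ι K (Sum.inl (E.r e)))
        (FreeAlgebra.ι K (Sum.inr e))
  | ev_ne (e : E.Edge) (u : E.V) : E.r e ≠ u →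
      PathRel (FreeAlgebra.ι K (Sum.inr e) * FreeAlgebra.ι K (Sum.inl u)) 0

/-- The ambient unital algebra (the unitalization of the path algebra). -/
abbrev PA : Type := RingQuot (E.PathRel K)

/-- The image of a vertex in the path algebra. -/
noncomputable def vtx (u : E.V) : E.PA K :=
  RingQuot.mkAlgHom K (E.PathRel K) (FreeAlgebra.ι K (Sum.inl u))

/-- The image of an edge in the path algebra. -/
noncomputable def edg (e : E.Edge) : E.PA K :=
  RingQuot.mkAlgHom K (E.PathRel K) (FreeAlgebra.ι K (Sum.inr e))

/-- The path algebra `KE`: the (non-unital) subalgebra spanned by all paths, i.e.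
generated by the vertices and edges. -/
noncomputable def KE : NonUnitalSubalgebra K (E.PA K) :=
  NonUnitalAlgebra.adjoin K (Set.range (E.vtx K) ∪ Set.range (E.edg K))

/-- The center `Z(KE)` of the path algebra. -/
def relCenter : Set (E.PA K) :=
  {z | z ∈ E.KE K ∧ ∀ a ∈ E.KE K, a * z = z * a}

/-- `E.IsPathFrom u v l` : the list of edges `l` is a path from `u` to `v`
(`l = []` is the trivial path at `u = v`). -/
def IsPathFrom : E.V → E.V → List E.Edge → Prop
  | u, v, [] => u = v
  | u, v, e :: l => E.s e = u ∧ IsPathFrom (E.r e) v l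

/-- The element of the path algebra corresponding to the path starting at `u`
with list of edges `l` (for `l = []` this is the vertex `u` itself). -/
noncomputable def pathElem (u : E.V) (l : List E.Edge) : E.PA K :=
  E.vtx K u * (l.map (E.edg K)).prod

/-- The sum of all vertices: the unit of `KE` when `E⁰` is finite. -/
noncomputable def unitKE : E.PA K := ∑ᶠ u : E.V, E.vtx K u

/-- The scalar multiples `K·1` of the unit of `KE`. -/
noncomputable def scalarSet : Set (E.PA K) := Set.range fun k : K => k • E.unitKE K

/-- One step in the underlying undirected graph. -/
def Step (u v : E.V) : Prop :=
  (∃ e : E.Edge, E.s e = u ∧ E.r e = v) ∨ (∃ e : E.Edge, E.s e = v ∧ E.r e = u)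

/-- `u ∼ v` : the vertices `u` and `v` are connected in the underlying undirected graph. -/
def Connected (u v : E.V) : Prop := Relation.ReflTransGen E.Step u v

/-- The graph `E` is connected. -/
def IsConnectedGraph : Prop := ∀ u v : E.V, E.Connected u v

/-- The graph `E` is a cycle: `n ≥ 1` vertices `u₁, …, uₙ` and `n` edges `f₁, …, fₙ` with
`s(fᵢ) = uᵢ`, `r(fᵢ) = uᵢ₊₁` (indices mod `n`). -/
def IsCycleGraph : Prop :=
  ∃ n : ℕ, ∃ hn : 0 < n, ∃ (hv : Fin n ≃ E.V) (he : Fin n ≃ E.Edge),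
    ∀ i : Fin n, E.s (he i) = hv i ∧ E.r (he i) = hv ⟨(i.1 + 1) % n, Nat.mod_lt _ hn⟩

end DirGraph

/-!
Every vertex `w` gives a character `χ_w : KE → K` with `χ_w(w) = 1` that kills all other
vertices and all edges, and `z * u = k • u` forces `χ_u(z) = k`. An edge `e : a → b` gives a
representation of `KE` by upper triangular `2 × 2` matrices, `w ↦ diag([w = a], [w = b])` and
`e ↦ E₁₂`, whose diagonal entries are `χ_a` and `χ_b`. The `(1,2)` entries of the images of
`e z = z e` are `χ_b(z)` and `χ_a(z)`, so `χ(z)` is constant along edges, hence on the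
connected component of `u`.
-/

theorem Matrix.BlockTriangular.mul_apply_self {m R : Type*} [LinearOrder m] [Fintype m]
    [NonUnitalNonAssocSemiring R] {M N : Matrix m m R} (hM : M.BlockTriangular id)
    (hN : N.BlockTriangular id) (i : m) : (M * N) i i = M i i * N i i := by
  rw [Matrix.mul_apply, Finset.sum_eq_single i]
  · intro k _ hki
    rcases hki.lt_or_gt with hk | hk
    · rw [hM hk, zero_mul]
    · rw [hN hk, mul_zero]
  · simp

def Matrix.upperTriangularDiagEntry {m : Type*} (R : Type*) [LinearOrder m] [Fintype m]
    [DecidableEq m] [CommSemiring R] (i : m) :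
    Matrix.blockTriangularSubalgebra R R (id : m → m) →ₐ[R] R where
  toFun M := M.1 i i
  map_one' := Matrix.one_apply_eq i
  map_mul' M N := M.2.mul_apply_self N.2 i
  map_zero' := rfl
  map_add' _ _ := rfl
  commutes' r := by simp [Matrix.algebraMap_matrix_apply]

@[simp]
theorem Matrix.upperTriangularDiagEntry_apply {m : Type*} (R : Type*) [LinearOrder m] [Fintype m]
    [DecidableEq m] [CommSemiring R] (i : m) (M : Matrix.blockTriangularSubalgebra R R id) :
    Matrix.upperTriangularDiagEntry R i M = M.1 i i :=
  rfl

namespace DirGraph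

variable (E : DirGraph)

structure PathFamily (A : Type*) [Semiring A] where
  vtx : E.V → A
  edg : E.Edge → A
  vtx_mul_self : ∀ u, vtx u * vtx u = vtx u
  vtx_mul_vtx_of_ne : ∀ u v, u ≠ v → vtx u * vtx v = 0
  vtx_source_mul_edg : ∀ e, vtx (E.s e) * edg e = edg e
  vtx_mul_edg_of_ne : ∀ u e, E.s e ≠ u → vtx u * edg e = 0
  edg_mul_vtx_target : ∀ e, edg e * vtx (E.r e) = edg e
  edg_mul_vtx_of_ne : ∀ e u, E.r e ≠ u → edg e * vtx u = 0

variable {E} (K : Type) [Field K] {A : Type*} [Semiring A] [Algebra K A]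

noncomputable def PathFamily.lift (P : E.PathFamily A) : E.PA K →ₐ[K] A :=
  RingQuot.liftAlgHom K ⟨FreeAlgebra.lift K (Sum.elim P.vtx P.edg), fun _ _ h => by
    cases h <;> simp [P.vtx_mul_self, P.vtx_mul_vtx_of_ne, P.vtx_source_mul_edg,
      P.vtx_mul_edg_of_ne, P.edg_mul_vtx_target, P.edg_mul_vtx_of_ne, *]⟩

@[simp]
theorem PathFamily.lift_vtx (P : E.PathFamily A) (u : E.V) : P.lift K (E.vtx K u) = P.vtx u := by
  simp [lift, DirGraph.vtx]

@[simp]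
theorem PathFamily.lift_edg (P : E.PathFamily A) (e : E.Edge) : P.lift K (E.edg K e) = P.edg e := by
  simp [lift, DirGraph.edg]

theorem PA.algHom_ext {f g : E.PA K →ₐ[K] A} (hvtx : ∀ u, f (E.vtx K u) = g (E.vtx K u))
    (hedg : ∀ e, f (E.edg K e) = g (E.edg K e)) : f = g :=
  RingQuot.ringQuot_ext' K f g <| FreeAlgebra.hom_ext <| funext <| Sum.rec hvtx hedg

section Characters

open scoped Classical

noncomputable def vertexChar (w : E.V) : E.PA K →ₐ[K] K :=
  PathFamily.lift K
    { vtx := fun u => if u = w then 1 else 0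
      edg := 0
      vtx_mul_self := by intro u; split_ifs <;> simp
      vtx_mul_vtx_of_ne := by intro u v huv; split_ifs <;> simp_all
      vtx_source_mul_edg := by simp
      vtx_mul_edg_of_ne := by simp
      edg_mul_vtx_target := by simp
      edg_mul_vtx_of_ne := by simp }

@[simp]
theorem vertexChar_vtx (w u : E.V) : vertexChar K w (E.vtx K u) = if u = w then 1 else 0 :=
  PathFamily.lift_vtx K _ u

@[simp]
theorem vertexChar_edg (w : E.V) (e : E.Edge) : vertexChar K w (E.edg K e) = 0 :=
  PathFamily.lift_edg K _ e

noncomputable def edgeRep (e : E.Edge) :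
    E.PA K →ₐ[K] Matrix.blockTriangularSubalgebra K K (id : Fin 2 → Fin 2) :=
  PathFamily.lift K
    { vtx := fun u => ⟨Matrix.diagonal ![if u = E.s e then 1 else 0, if u = E.r e then 1 else 0],
        Matrix.blockTriangular_diagonal _⟩
      edg := fun f => ⟨Matrix.single 0 1 (if f = e then 1 else 0), by
        intro i j hij
        fin_cases i <;> fin_cases j <;> simp_all⟩
      vtx_mul_self := by
        intro u; ext i j; fin_cases i <;> fin_cases j <;> simp [Matrix.mul_apply]
      vtx_mul_vtx_of_ne := by
        intro u v huv; ext i j; fin_cases i <;> fin_cases j <;> simp [Matrix.mul_apply] <;> grind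
      vtx_source_mul_edg := by
        intro f; ext i j; fin_cases i <;> fin_cases j <;> simp
        grind
      vtx_mul_edg_of_ne := by
        intro u f hf; ext i j; fin_cases i <;> fin_cases j <;> simp
        grind
      edg_mul_vtx_target := by
        intro f; ext i j; fin_cases i <;> fin_cases j <;> simp
        grind
      edg_mul_vtx_of_ne := by
        intro f u hf; ext i j; fin_cases i <;> fin_cases j <;> simp
        grind }

theorem edgeRep_edg_self (e : E.Edge) : (edgeRep K e (E.edg K e)).1 = Matrix.single 0 1 1 := by
  simp [edgeRep]

theorem edgeRep_apply_source (e : E.Edge) (x : E.PA K) :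
    (edgeRep K e x).1 0 0 = vertexChar K (E.s e) x := by
  have : (Matrix.upperTriangularDiagEntry K 0).comp (edgeRep K e) = vertexChar K (E.s e) :=
    PA.algHom_ext K (fun u => by simp [edgeRep]) (fun f => by simp [edgeRep])
  exact AlgHom.congr_fun this x

theorem edgeRep_apply_target (e : E.Edge) (x : E.PA K) :
    (edgeRep K e x).1 1 1 = vertexChar K (E.r e) x := by
  have : (Matrix.upperTriangularDiagEntry K 1).comp (edgeRep K e) = vertexChar K (E.r e) :=
    PA.algHom_ext K (fun u => by simp [edgeRep]) (fun f => by simp [edgeRep])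
  exact AlgHom.congr_fun this x

end Characters

theorem vertexChar_source_eq_target {e : E.Edge} {z : E.PA K}
    (hez : E.edg K e * z = z * E.edg K e) : vertexChar K (E.s e) z = vertexChar K (E.r e) z := by
  have h01 := congrArg (fun x => (edgeRep K e x).1 0 1) hez
  simpa [Matrix.mul_apply, edgeRep_edg_self, edgeRep_apply_source, edgeRep_apply_target]
    using h01.symm

theorem vertexChar_eq_of_connected {z : E.PA K} (hz : ∀ e, E.edg K e * z = z * E.edg K e)
    {u v : E.V} (huv : E.Connected u v) : vertexChar K u z = vertexChar K v z := by
  induction huv with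
  | refl => rfl
  | tail _ hstep ih =>
    rcases hstep with ⟨e, rfl, rfl⟩ | ⟨e, rfl, rfl⟩
    · exact ih.trans (vertexChar_source_eq_target K (hz e))
    · exact ih.trans (vertexChar_source_eq_target K (hz e)).symm

theorem vertexChar_eq_of_mul_vtx_eq_smul {z : E.PA K} {w : E.V} {k : K}
    (h : z * E.vtx K w = k • E.vtx K w) : vertexChar K w z = k := by
  simpa using congrArg (vertexChar K w) h

variable (E) in
theorem edg_mem_KE (e : E.Edge) : E.edg K e ∈ E.KE K :=
  NonUnitalAlgebra.subset_adjoin K (Or.inr ⟨e, rfl⟩)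

end DirGraph

theorem stmt4_general (K : Type) [Field K] (E : DirGraph) (z : E.PA K)
    (hz : z ∈ E.relCenter K) (u v : E.V)
    (k h : K)
    (hu : z * E.vtx K u = k • E.vtx K u) (hv : z * E.vtx K v = h • E.vtx K v)
    (hconn : E.Connected u v) : k = h := by
  have hcomm (e : E.Edge) : E.edg K e * z = z * E.edg K e := hz.2 _ (E.edg_mem_KE K e)
  rw [← DirGraph.vertexChar_eq_of_mul_vtx_eq_smul K hu,
    ← DirGraph.vertexChar_eq_of_mul_vtx_eq_smul K hv,
    DirGraph.vertexChar_eq_of_connected K hcomm hconn]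

/-- If `z ∈ Z(KE)` is nonzero with Peirce components `z_u = k·u` and
`z_v = h·v` at distinct vertices `u ≠ v`, `k, h ∈ K^×`, and `u ∼ v`, then `k = h`. -/
theorem stmt4 (K : Type) [Field K] (E : DirGraph) (z : E.PA K)
    (hz : z ∈ E.relCenter K) (hz0 : z ≠ 0) (u v : E.V) (huv : u ≠ v)
    (k h : K) (hk : k ≠ 0) (hh : h ≠ 0)
    (hu : z * E.vtx K u = k • E.vtx K u) (hv : z * E.vtx K v = h • E.vtx K v)
    (hconn : E.Connected u v) : k = h :=
  stmt4_general K E z hz u v k h hu hv hconn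
end

section
/- Let E be a directed graph and K a field. If the center Z(KE) of the path algebra is nonzero and not contained in K·1, then E is a cycle, i.e., E consists of n ≥ 1 vertices u_1, …, u_n and n edges f_1, …, f_n with s(f_i) = u_i, r(f_i) = u_{i+1} for i < n and r(f_n) = u_1. -/
/-!
Realise the path algebra on functions of `(vertex, list of edges)`, with vertices and edges
acting by left multiplication. Applied to the indicator of the trivial paths, this reads off the
coefficients of an element of `KE` in the basis of paths, and right multiplication by a vertex or
an edge becomes an operator on coefficient functions that commutes with the left action.

For a central `z`, comparing the coefficients of `v z` and `z v` shows that only closed paths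
occur, and comparing `e z` with `z e` shows that the coefficients are invariant under rotating a
closed path through an edge. If only trivial paths occur, their coefficients agree along every
edge, so `z` is a multiple of the sum of the (finitely many) vertices. Otherwise every vertex
carries a nontrivial closed path, whose first edge must be the unique edge leaving the vertex and
whose last edge the unique edge entering it; hence `s` and `r` are bijections and `E` is a cycle.
-/

open scoped Classical

namespace DirGraph

noncomputable section

variable {K : Type} [Field K] {E : DirGraph}

lemma vtx_mul_vtx (u v : E.V) : E.vtx K u * E.vtx K v = if u = v then E.vtx K u else 0 := by
  split_ifs with h
  · subst h
    rw [vtx, ← map_mul]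
    exact RingQuot.mkAlgHom_rel K (PathRel.vv_eq u)
  · rw [vtx, vtx, ← map_mul, ← map_zero (RingQuot.mkAlgHom K (E.PathRel K))]
    exact RingQuot.mkAlgHom_rel K (PathRel.vv_ne u v h)

lemma vtx_mul_edg (u : E.V) (e : E.Edge) :
    E.vtx K u * E.edg K e = if E.s e = u then E.edg K e else 0 := by
  split_ifs with h
  · subst h
    rw [vtx, edg, ← map_mul]
    exact RingQuot.mkAlgHom_rel K (PathRel.ve_eq e)
  · rw [vtx, edg, ← map_mul, ← map_zero (RingQuot.mkAlgHom K (E.PathRel K))]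
    exact RingQuot.mkAlgHom_rel K (PathRel.ve_ne u e h)

lemma edg_mul_vtx (e : E.Edge) (u : E.V) :
    E.edg K e * E.vtx K u = if E.r e = u then E.edg K e else 0 := by
  split_ifs with h
  · subst h
    rw [vtx, edg, ← map_mul]
    exact RingQuot.mkAlgHom_rel K (PathRel.ev_eq e)
  · rw [vtx, edg, ← map_mul, ← map_zero (RingQuot.mkAlgHom K (E.PathRel K))]
    exact RingQuot.mkAlgHom_rel K (PathRel.ev_ne e u h)

lemma pathElem_nil (u : E.V) : E.pathElem K u [] = E.vtx K u := by
  rw [pathElem, List.map_nil, List.prod_nil, mul_one]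

lemma pathElem_cons_of_s_eq {u : E.V} {e : E.Edge} (h : E.s e = u) (l : List E.Edge) :
    E.pathElem K u (e :: l) = E.edg K e * E.pathElem K (E.r e) l := by
  subst h
  rw [pathElem, pathElem, List.map_cons, List.prod_cons, ← mul_assoc, ← mul_assoc, vtx_mul_edg,
    edg_mul_vtx, if_pos rfl, if_pos rfl]

lemma pathElem_single (e : E.Edge) : E.pathElem K (E.s e) [e] = E.edg K e := by
  rw [pathElem_cons_of_s_eq rfl, pathElem_nil, edg_mul_vtx, if_pos rfl]

lemma vtx_mul_pathElem (v u : E.V) (l : List E.Edge) :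
    E.vtx K v * E.pathElem K u l = if v = u then E.pathElem K u l else 0 := by
  rw [pathElem, ← mul_assoc, vtx_mul_vtx]
  split_ifs with h
  · rw [h]
  · rw [zero_mul]

lemma edg_mul_pathElem (e : E.Edge) (u : E.V) (l : List E.Edge) :
    E.edg K e * E.pathElem K u l = if E.r e = u then E.pathElem K (E.s e) (e :: l) else 0 := by
  split_ifs with h
  · rw [pathElem_cons_of_s_eq rfl, h]
  · rw [pathElem, ← mul_assoc, edg_mul_vtx, if_neg h, zero_mul]

variable (E) in
def paths : Set (E.V × List E.Edge) := {x | ∃ v, E.IsPathFrom x.1 v x.2}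

lemma nil_mem_paths (u : E.V) : (u, []) ∈ E.paths := ⟨u, rfl⟩

lemma cons_mem_paths {u : E.V} {e : E.Edge} {l : List E.Edge} :
    (u, e :: l) ∈ E.paths ↔ E.s e = u ∧ (E.r e, l) ∈ E.paths := by
  show (∃ v, _) ↔ _ ∧ ∃ v, _
  simp only [IsPathFrom, exists_and_left]

variable (K E) in
def pathSpan : Submodule K (E.PA K) :=
  Submodule.span K (Function.uncurry (E.pathElem K) '' E.paths)

lemma pathElem_mem_pathSpan {u : E.V} {l : List E.Edge} (h : (u, l) ∈ E.paths) :
    E.pathElem K u l ∈ E.pathSpan K :=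
  Submodule.subset_span ⟨(u, l), h, rfl⟩

lemma mul_mem_pathSpan {a y : E.PA K}
    (ha : ∀ x ∈ E.paths, a * E.pathElem K x.1 x.2 ∈ E.pathSpan K) (hy : y ∈ E.pathSpan K) :
    a * y ∈ E.pathSpan K := by
  have : E.pathSpan K ≤ (E.pathSpan K).comap (LinearMap.mulLeft K a) :=
    Submodule.span_le.mpr (by rintro _ ⟨x, hx, rfl⟩; exact ha x hx)
  exact this hy

lemma mem_pathSpan_of_mem_KE {z : E.PA K} (hz : z ∈ E.KE K) : z ∈ E.pathSpan K := by
  suffices z ∈ E.pathSpan K ∧ ∀ y ∈ E.pathSpan K, z * y ∈ E.pathSpan K from this.1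
  induction hz using NonUnitalAlgebra.adjoin_induction with
  | mem g hg =>
    rcases hg with ⟨v, rfl⟩ | ⟨e, rfl⟩
    · refine ⟨pathElem_nil (K := K) v ▸ pathElem_mem_pathSpan (nil_mem_paths v),
        fun y hy => mul_mem_pathSpan (fun x hx => ?_) hy⟩
      rw [vtx_mul_pathElem]
      split_ifs
      · exact pathElem_mem_pathSpan hx
      · exact zero_mem _
    · refine ⟨?_, fun y hy => mul_mem_pathSpan (fun x hx => ?_) hy⟩
      · exact pathElem_single (K := K) e ▸
          pathElem_mem_pathSpan (cons_mem_paths.mpr ⟨rfl, nil_mem_paths _⟩)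
      · rw [edg_mul_pathElem]
        split_ifs with h
        · exact pathElem_mem_pathSpan (cons_mem_paths.mpr ⟨rfl, h ▸ hx⟩)
        · exact zero_mem _
  | add x y _ _ hx hy =>
    exact ⟨add_mem hx.1 hy.1, fun w hw => add_mul x y w ▸ add_mem (hx.2 w hw) (hy.2 w hw)⟩
  | zero => exact ⟨zero_mem _, fun w _ => (zero_mul w).symm ▸ zero_mem _⟩
  | mul x y _ _ hx hy =>
    exact ⟨hx.2 y hy.1, fun w hw => (mul_assoc x y w).symm ▸ hx.2 _ (hy.2 w hw)⟩
  | smul a x _ hx =>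
    exact ⟨Submodule.smul_mem _ a hx.1,
      fun w hw => (smul_mul_assoc a x w).symm ▸ Submodule.smul_mem _ a (hx.2 w hw)⟩

variable (K) in
def maskComap {X : Type} (p : X → Prop) (g : X → X) : Module.End K (X → K) where
  toFun w x := if p x then w (g x) else 0
  map_add' w w' := funext fun x => by by_cases hx : p x <;> simp [hx]
  map_smul' a w := funext fun x => by by_cases hx : p x <;> simp [hx]

lemma maskComap_apply {X : Type} (p : X → Prop) (g : X → X) (w : X → K) (x : X) :
    maskComap K p g w x = if p x then w (g x) else 0 := rfl

lemma maskComap_commute {X : Type} {p q : X → Prop} {g h : X → X}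
    (hpq : ∀ x, p x ∧ q (g x) ↔ q x ∧ p (h x))
    (hgh : ∀ x, p x → q (g x) → h (g x) = g (h x)) :
    Commute (maskComap K p g) (maskComap K q h) := by
  refine LinearMap.ext fun w => funext fun x => ?_
  simp only [Module.End.mul_apply, maskComap_apply]
  by_cases hx : p x ∧ q (g x)
  · rw [if_pos hx.1, if_pos hx.2, if_pos ((hpq x).1 hx).1, if_pos ((hpq x).1 hx).2,
      hgh x hx.1 hx.2]
  · have hx' := mt (hpq x).2 hx
    simp only [not_and_or] at hx hx'
    rcases hx with hx | hx <;> rcases hx' with hx' | hx' <;> simp [hx, hx']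

def pathTarget (E : DirGraph) : E.V → List E.Edge → E.V
  | u, [] => u
  | _, e :: l => E.pathTarget (E.r e) l

lemma pathTarget_of_getLast?_eq {u : E.V} {l : List E.Edge} {e : E.Edge}
    (h : l.getLast? = some e) : E.pathTarget u l = E.r e := by
  induction l generalizing u with
  | nil => simp at h
  | cons a t ih =>
    cases t with
    | nil => simp_all [pathTarget]
    | cons b t => exact ih (u := E.r b) (by simpa [List.getLast?_cons_cons] using h)

/- A function `w` on pairs `(source, list of edges)` stands for the formal combination
`∑ w (u, l) • (u, l)`; pairs that are not paths are harmless, as they never carry coefficients of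
elements of `KE`. The four operators below are left and right multiplication by vertices and
edges. -/

variable (K E) in
def leftVtx (v : E.V) : Module.End K (E.V × List E.Edge → K) :=
  maskComap K (fun x => x.1 = v) id

variable (K E) in
def leftEdg (e : E.Edge) : Module.End K (E.V × List E.Edge → K) :=
  maskComap K (fun x => x.1 = E.s e ∧ x.2.head? = some e) (fun x => (E.r e, x.2.tail))

variable (K E) in
def rightVtx (v : E.V) : Module.End K (E.V × List E.Edge → K) :=
  maskComap K (fun x => E.pathTarget x.1 x.2 = v) id

variable (K E) in
def rightEdg (e : E.Edge) : Module.End K (E.V × List E.Edge → K) :=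
  maskComap K (fun x => x.2.getLast? = some e ∧ E.pathTarget x.1 x.2.dropLast = E.s e)
    (fun x => (x.1, x.2.dropLast))

variable (K E) in
/-- The coefficient vector of `1`. -/
def nilIndicator : E.V × List E.Edge → K := fun x => if x.2 = [] then 1 else 0

lemma leftVtx_nilIndicator (v : E.V) :
    leftVtx K E v (nilIndicator K E) = rightVtx K E v (nilIndicator K E) := by
  funext ⟨u, l⟩
  cases l <;> simp [leftVtx, rightVtx, maskComap_apply, nilIndicator, pathTarget]

lemma leftEdg_nilIndicator (e : E.Edge) :
    leftEdg K E e (nilIndicator K E) = rightEdg K E e (nilIndicator K E) := by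
  funext ⟨u, l⟩
  rcases l with _ | ⟨a, _ | ⟨b, t⟩⟩ <;>
    simp [leftEdg, rightEdg, maskComap_apply, nilIndicator, pathTarget, and_comm, eq_comm]

lemma commute_leftVtx_rightVtx (v w : E.V) : Commute (leftVtx K E v) (rightVtx K E w) :=
  maskComap_commute (fun _ => and_comm) (fun _ _ _ => rfl)

lemma commute_leftVtx_rightEdg (v : E.V) (e : E.Edge) :
    Commute (leftVtx K E v) (rightEdg K E e) :=
  maskComap_commute (fun _ => and_comm) (fun _ _ _ => rfl)

lemma commute_leftEdg_rightVtx (e : E.Edge) (v : E.V) :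
    Commute (leftEdg K E e) (rightVtx K E v) := by
  refine maskComap_commute (fun ⟨u, l⟩ => ?_) (fun _ _ _ => rfl)
  cases l <;> simp [pathTarget, and_comm]
  aesop

lemma commute_leftEdg_rightEdg (e f : E.Edge) : Commute (leftEdg K E e) (rightEdg K E f) := by
  refine maskComap_commute (fun ⟨u, l⟩ => ?_) (fun _ _ _ => by simp [List.tail_dropLast])
  rcases l with _ | ⟨a, _ | ⟨b, t⟩⟩ <;>
    simp [pathTarget, List.getLast?_cons_cons, List.dropLast_cons_cons, and_comm]
  aesop

variable (K E) in
def genAct : E.Gen → Module.End K (E.V × List E.Edge → K) :=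
  Sum.elim (leftVtx K E) (leftEdg K E)

lemma lift_genAct_eq_of_pathRel {x y : FreeAlgebra K E.Gen} (h : E.PathRel K x y) :
    FreeAlgebra.lift K (genAct K E) x = FreeAlgebra.lift K (genAct K E) y := by
  refine LinearMap.ext fun w => funext fun ⟨u, l⟩ => ?_
  cases h <;> simp [genAct, leftVtx, leftEdg, maskComap_apply] <;> aesop

variable (K E) in
/-- The left regular representation of the path algebra, in coordinates. -/
def pathRep : E.PA K →ₐ[K] Module.End K (E.V × List E.Edge → K) :=
  RingQuot.liftAlgHom K ⟨FreeAlgebra.lift K (genAct K E), fun _ _ => lift_genAct_eq_of_pathRel⟩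

lemma pathRep_vtx (v : E.V) : pathRep K E (E.vtx K v) = leftVtx K E v := by
  rw [pathRep, vtx, RingQuot.liftAlgHom_mkAlgHom_apply, FreeAlgebra.lift_ι_apply]; rfl

lemma pathRep_edg (e : E.Edge) : pathRep K E (E.edg K e) = leftEdg K E e := by
  rw [pathRep, edg, RingQuot.liftAlgHom_mkAlgHom_apply, FreeAlgebra.lift_ι_apply]; rfl

lemma pathRep_mem {S : Subalgebra K (Module.End K (E.V × List E.Edge → K))}
    (hv : ∀ v, leftVtx K E v ∈ S) (he : ∀ e, leftEdg K E e ∈ S) (a : E.PA K) :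
    pathRep K E a ∈ S := by
  obtain ⟨x, rfl⟩ := RingQuot.mkAlgHom_surjective K (E.PathRel K) a
  rw [pathRep, RingQuot.liftAlgHom_mkAlgHom_apply]
  induction x using FreeAlgebra.induction with
  | grade0 r => rw [AlgHom.commutes]; exact S.algebraMap_mem r
  | grade1 g =>
    rw [FreeAlgebra.lift_ι_apply]
    cases g with
    | inl v => exact hv v
    | inr e => exact he e
  | mul a b ha hb => rw [map_mul]; exact S.mul_mem ha hb
  | add a b ha hb => rw [map_add]; exact S.add_mem ha hb

lemma commute_pathRep {f : Module.End K (E.V × List E.Edge → K)}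
    (hv : ∀ v, Commute f (leftVtx K E v)) (he : ∀ e, Commute f (leftEdg K E e)) (a : E.PA K) :
    Commute f (pathRep K E a) := by
  have := pathRep_mem (S := Subalgebra.centralizer K {f}) (fun v => ?_) (fun e => ?_) a
  · exact (Subalgebra.mem_centralizer_iff K).mp this f rfl
  · exact (Subalgebra.mem_centralizer_iff K).mpr fun g hg => hg ▸ (hv v).eq
  · exact (Subalgebra.mem_centralizer_iff K).mpr fun g hg => hg ▸ (he e).eq

variable (K E) in
def pathCoeff : E.PA K →ₗ[K] (E.V × List E.Edge → K) :=
  LinearMap.applyₗ (nilIndicator K E) ∘ₗ (pathRep K E).toLinearMap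

lemma pathCoeff_apply (z : E.PA K) : pathCoeff K E z = pathRep K E z (nilIndicator K E) := rfl

lemma pathCoeff_vtx_mul (v : E.V) (z : E.PA K) :
    pathCoeff K E (E.vtx K v * z) = leftVtx K E v (pathCoeff K E z) := by
  rw [pathCoeff_apply, map_mul, Module.End.mul_apply, pathRep_vtx, pathCoeff_apply]

lemma pathCoeff_edg_mul (e : E.Edge) (z : E.PA K) :
    pathCoeff K E (E.edg K e * z) = leftEdg K E e (pathCoeff K E z) := by
  rw [pathCoeff_apply, map_mul, Module.End.mul_apply, pathRep_edg, pathCoeff_apply]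

lemma pathCoeff_mul_vtx (z : E.PA K) (v : E.V) :
    pathCoeff K E (z * E.vtx K v) = rightVtx K E v (pathCoeff K E z) := by
  have := commute_pathRep (fun w => (commute_leftVtx_rightVtx w v).symm)
    (fun e => (commute_leftEdg_rightVtx e v).symm) z
  rw [pathCoeff_apply, map_mul, Module.End.mul_apply, pathRep_vtx, leftVtx_nilIndicator,
    ← Module.End.mul_apply, ← this.eq, Module.End.mul_apply, pathCoeff_apply]

lemma pathCoeff_mul_edg (z : E.PA K) (e : E.Edge) :
    pathCoeff K E (z * E.edg K e) = rightEdg K E e (pathCoeff K E z) := by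
  have := commute_pathRep (fun v => (commute_leftVtx_rightEdg v e).symm)
    (fun f => (commute_leftEdg_rightEdg f e).symm) z
  rw [pathCoeff_apply, map_mul, Module.End.mul_apply, pathRep_edg, leftEdg_nilIndicator,
    ← Module.End.mul_apply, ← this.eq, Module.End.mul_apply, pathCoeff_apply]

/-- The relations satisfied by the coefficients of an element commuting with all vertices and
edges. -/
structure IsCentralCoeff (c : E.V × List E.Edge → K) : Prop where
  vtx : ∀ v, leftVtx K E v c = rightVtx K E v c
  edg : ∀ e, leftEdg K E e c = rightEdg K E e c

lemma isCentralCoeff_pathCoeff {z : E.PA K} (hz : z ∈ E.relCenter K) :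
    IsCentralCoeff (pathCoeff K E z) where
  vtx v := by
    rw [← pathCoeff_vtx_mul, ← pathCoeff_mul_vtx,
      hz.2 _ (NonUnitalAlgebra.subset_adjoin K (Or.inl ⟨v, rfl⟩))]
  edg e := by
    rw [← pathCoeff_edg_mul, ← pathCoeff_mul_edg,
      hz.2 _ (NonUnitalAlgebra.subset_adjoin K (Or.inr ⟨e, rfl⟩))]

lemma pathCoeff_vtx (v : E.V) : pathCoeff K E (E.vtx K v) = Pi.single (v, []) 1 := by
  funext ⟨u, l⟩
  simp [pathCoeff_apply, pathRep_vtx, leftVtx, maskComap_apply, nilIndicator, Pi.single_apply,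
    ite_and]

lemma leftEdg_single (e : E.Edge) (l : List E.Edge) :
    leftEdg K E e (Pi.single (E.r e, l) 1) = Pi.single (E.s e, e :: l) 1 := by
  funext ⟨u, m⟩
  cases m <;> simp [leftEdg, maskComap_apply, Pi.single_apply, ite_and]

lemma pathCoeff_pathElem {u : E.V} {l : List E.Edge} (h : (u, l) ∈ E.paths) :
    pathCoeff K E (E.pathElem K u l) = Pi.single (u, l) 1 := by
  induction l generalizing u with
  | nil => rw [pathElem_nil, pathCoeff_vtx]
  | cons e l ih =>
    obtain ⟨rfl, hl⟩ := cons_mem_paths.mp h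
    rw [pathElem_cons_of_s_eq rfl, pathCoeff_edg_mul, ih hl, leftEdg_single]

lemma pathCoeff_linearCombination {d : E.V × List E.Edge →₀ K}
    (hd : d ∈ Finsupp.supported K K E.paths) :
    pathCoeff K E (Finsupp.linearCombination K (Function.uncurry (E.pathElem K)) d) = d := by
  have hsingle : ∀ x ∈ d.support,
      pathCoeff K E (d x • Function.uncurry (E.pathElem K) x) = Pi.single x (d x) := by
    intro x hx
    rw [map_smul, Function.uncurry_def, pathCoeff_pathElem (hd hx), Prod.mk.eta,
      ← Pi.single_smul', smul_eq_mul, mul_one]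
  funext y
  rw [Finsupp.linearCombination_apply, map_finsuppSum, Finsupp.sum, Finset.sum_congr rfl hsingle]
  simp [Finset.sum_apply, Pi.single_apply, eq_comm]

lemma exists_finsupp_of_mem_pathSpan {z : E.PA K} (hz : z ∈ E.pathSpan K) :
    ∃ d : E.V × List E.Edge →₀ K, d ∈ Finsupp.supported K K E.paths ∧
      Finsupp.linearCombination K (Function.uncurry (E.pathElem K)) d = z ∧
      ⇑d = pathCoeff K E z := by
  obtain ⟨d, hd, rfl⟩ := (Finsupp.mem_span_image_iff_linearCombination K).mp hz
  exact ⟨d, hd, rfl, (pathCoeff_linearCombination hd).symm⟩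

lemma finite_support_pathCoeff {z : E.PA K} (hz : z ∈ E.pathSpan K) :
    (Function.support (pathCoeff K E z)).Finite := by
  obtain ⟨d, -, -, hd⟩ := exists_finsupp_of_mem_pathSpan hz
  exact hd ▸ d.fun_support_eq ▸ d.support.finite_toSet

lemma mem_paths_of_pathCoeff_ne_zero {z : E.PA K} (hz : z ∈ E.pathSpan K)
    {x : E.V × List E.Edge} (hx : pathCoeff K E z x ≠ 0) : x ∈ E.paths := by
  obtain ⟨d, hsupp, -, hd⟩ := exists_finsupp_of_mem_pathSpan hz
  by_contra hxs
  exact hx (hd ▸ (Finsupp.mem_supported' K d).mp hsupp x hxs)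

lemma pathCoeff_injOn : Set.InjOn (pathCoeff K E) (E.pathSpan K) := by
  intro z hz w hw h
  obtain ⟨d, -, rfl, hd⟩ := exists_finsupp_of_mem_pathSpan hz
  obtain ⟨d', -, rfl, hd'⟩ := exists_finsupp_of_mem_pathSpan hw
  rw [DFunLike.coe_injective (hd.trans (h.trans hd'.symm))]

namespace IsCentralCoeff

variable {c : E.V × List E.Edge → K}

lemma pathTarget_eq (hc : IsCentralCoeff c) {u : E.V} {l : List E.Edge} (h : c (u, l) ≠ 0) :
    E.pathTarget u l = u := by
  have key := congrFun (hc.vtx u) (u, l)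
  simp only [leftVtx, rightVtx, maskComap_apply, id] at key
  by_contra hne
  exact h (by rwa [if_neg hne] at key)

lemma r_nil_eq_s_nil (hc : IsCentralCoeff c) (e : E.Edge) : c (E.r e, []) = c (E.s e, []) := by
  simpa [leftEdg, rightEdg, maskComap_apply, pathTarget] using congrFun (hc.edg e) (E.s e, [e])

lemma head?_eq_of_s_eq (hc : IsCentralCoeff c) {u : E.V} {l : List E.Edge} {e : E.Edge}
    (h : c (u, l) ≠ 0) (hl : l ≠ []) (he : E.s e = u) :
    l.head? = some e ∧ c (E.r e, l.tail ++ [e]) = c (u, l) := by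
  have key := congrFun (hc.edg e) (u, l ++ [e])
  simp only [leftEdg, rightEdg, maskComap_apply, List.getLast?_concat, List.dropLast_concat,
    hc.pathTarget_eq h, he, List.head?_append_of_ne_nil _ hl, List.tail_append_of_ne_nil hl,
    true_and, and_true, if_true] at key
  split_ifs at key with hcond
  · exact ⟨hcond, key⟩
  · exact absurd key.symm h

lemma getLast?_eq_of_r_eq (hc : IsCentralCoeff c) {u : E.V} {l : List E.Edge} {e : E.Edge}
    (h : c (u, l) ≠ 0) (hl : l ≠ []) (he : E.r e = u) :
    l.getLast? = some e ∧ c (E.s e, e :: l.dropLast) = c (u, l) := by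
  have hlast : (e :: l).getLast? = l.getLast? := by
    obtain ⟨b, t, rfl⟩ := List.exists_cons_of_ne_nil hl
    exact List.getLast?_cons_cons
  have key := congrFun (hc.edg e) (E.s e, e :: l)
  simp only [leftEdg, rightEdg, maskComap_apply, List.head?_cons, List.tail_cons, he, hlast,
    List.dropLast_cons_of_ne_nil hl, true_and, if_true] at key
  split_ifs at key with hcond
  · exact ⟨hcond.1, key.symm⟩
  · exact absurd key h

end IsCentralCoeff

lemma IsConnectedGraph.forall_of_iff (hconn : E.IsConnectedGraph) {P : E.V → Prop}
    (hP : ∀ e, P (E.s e) ↔ P (E.r e)) {u : E.V} (hu : P u) (v : E.V) : P v := by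
  induction hconn u v with
  | refl => exact hu
  | tail _ hstep ih =>
    rcases hstep with ⟨e, rfl, rfl⟩ | ⟨e, rfl, rfl⟩
    · exact (hP e).mp ih
    · exact (hP e).mpr ih

/-- `r ∘ s⁻¹` is a permutation of the vertices with a single orbit. -/
theorem isCycleGraph_of_bijective (hconn : E.IsConnectedGraph) [Finite E.V] [Nonempty E.V]
    (hs : Function.Bijective E.s) (hr : Function.Bijective E.r) : E.IsCycleGraph := by
  let σ : Equiv.Perm E.V := (Equiv.ofBijective _ hs).symm.trans (Equiv.ofBijective _ hr)
  have hσ (e : E.Edge) : σ (E.s e) = E.r e := by simp [σ]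
  obtain ⟨v₀⟩ := ‹Nonempty E.V›
  have hcycle : ∀ v, σ.SameCycle v₀ v := hconn.forall_of_iff
    (fun e => by rw [← hσ, Equiv.Perm.sameCycle_apply_right]) (Equiv.Perm.SameCycle.refl σ v₀)
  set n := Function.minimalPeriod σ v₀
  have hn : 0 < n :=
    Function.minimalPeriod_pos_of_mem_periodicPts (σ.injective.mem_periodicPts v₀)
  let orbit : Fin n → E.V := fun i => σ^[i] v₀
  have horbit : Function.Bijective orbit := by
    refine ⟨fun i j h => Fin.ext (Function.iterate_injOn_Iio_minimalPeriod i.2 j.2 h),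
      fun v => ?_⟩
    obtain ⟨k, hk⟩ := (hcycle v).exists_nat_pow_eq
    refine ⟨⟨k % n, Nat.mod_lt _ hn⟩, ?_⟩
    rw [← hk, ← σ.iterate_eq_pow, ← Function.iterate_mod_minimalPeriod_eq]
  refine ⟨n, hn, Equiv.ofBijective orbit horbit,
    (Equiv.ofBijective orbit horbit).trans (Equiv.ofBijective _ hs).symm, fun i => ⟨?_, ?_⟩⟩
  · exact Equiv.ofBijective_apply_symm_apply _ hs _
  · show E.r ((Equiv.ofBijective E.s hs).symm (orbit i)) = orbit ⟨(i + 1) % n, Nat.mod_lt _ hn⟩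
    rw [← hσ, Equiv.ofBijective_apply_symm_apply E.s hs]
    exact (Function.iterate_succ_apply' σ i v₀).symm.trans
      Function.iterate_mod_minimalPeriod_eq.symm

lemma finite_of_forall_ne_zero {c : E.V × List E.Edge → K} (hfin : (Function.support c).Finite)
    {l : E.V → List E.Edge} (hl : ∀ u, c (u, l u) ≠ 0) : Finite E.V :=
  have := hfin.to_subtype
  Finite.of_injective (fun u => (⟨(u, l u), hl u⟩ : Function.support c))
    fun _ _ h => congrArg (fun x => x.1.1) h

lemma pathCoeff_sum_vtx [Fintype E.V] : pathCoeff K E (∑ u, E.vtx K u) = nilIndicator K E := by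
  funext ⟨v, l⟩
  simp only [map_sum, pathCoeff_vtx, Finset.sum_apply, Pi.single_apply, Prod.mk.injEq, ite_and,
    Finset.sum_ite_eq, Finset.mem_univ, if_true, nilIndicator]

lemma mem_scalarSet_of_support_pathCoeff_nil (hconn : E.IsConnectedGraph) {z : E.PA K}
    (hz : z ∈ E.pathSpan K) (hc : IsCentralCoeff (pathCoeff K E z))
    (hnil : ∀ x, pathCoeff K E z x ≠ 0 → x.2 = []) : z ∈ E.scalarSet K := by
  set c := pathCoeff K E z
  by_cases hc0 : c = 0
  · refine ⟨0, ?_⟩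
    change (0 : K) • E.unitKE K = z
    rw [zero_smul]
    exact pathCoeff_injOn (zero_mem _) hz (by rw [map_zero]; exact hc0.symm)
  obtain ⟨⟨u₀, l₀⟩, hx⟩ := Function.ne_iff.mp hc0
  obtain rfl : l₀ = [] := hnil _ hx
  have hconst : ∀ u, c (u, []) = c (u₀, []) :=
    hconn.forall_of_iff (P := fun u => c (u, []) = c (u₀, []))
      (fun e => by rw [hc.r_nil_eq_s_nil]) rfl
  have : Finite E.V := finite_of_forall_ne_zero (finite_support_pathCoeff hz) (l := fun _ => [])
    fun u => (hconst u).trans_ne hx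
  have := Fintype.ofFinite E.V
  have hcnil : c = c (u₀, []) • nilIndicator K E := funext fun ⟨u, l⟩ => by
    by_cases hl : l = []
    · simp [hl, hconst, nilIndicator]
    · simpa [hl, nilIndicator] using mt (hnil (u, l)) hl
  refine ⟨c (u₀, []), pathCoeff_injOn ?_ hz ?_⟩
  · rw [unitKE, finsum_eq_sum_of_fintype]
    exact Submodule.smul_mem _ _ (Submodule.sum_mem _ fun u _ =>
      pathElem_nil (K := K) u ▸ pathElem_mem_pathSpan (nil_mem_paths u))
  · rw [unitKE, finsum_eq_sum_of_fintype, map_smul, pathCoeff_sum_vtx]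
    exact hcnil.symm

lemma IsCentralCoeff.forall_exists_ne_nil {c : E.V × List E.Edge → K} (hc : IsCentralCoeff c)
    (hconn : E.IsConnectedGraph) {x : E.V × List E.Edge} (hx : c x ≠ 0) (hx' : x.2 ≠ []) :
    ∀ u, ∃ l ≠ [], c (u, l) ≠ 0 := by
  refine hconn.forall_of_iff (fun e => ⟨?_, ?_⟩) ⟨x.2, hx', hx⟩
  · rintro ⟨l, hl, hcl⟩
    exact ⟨l.tail ++ [e], by simp, (hc.head?_eq_of_s_eq hcl hl rfl).2 ▸ hcl⟩
  · rintro ⟨l, hl, hcl⟩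
    exact ⟨e :: l.dropLast, by simp, (hc.getLast?_eq_of_r_eq hcl hl rfl).2 ▸ hcl⟩

lemma isCycleGraph_of_isCentralCoeff (hconn : E.IsConnectedGraph) {c : E.V × List E.Edge → K}
    (hc : IsCentralCoeff c) (hfin : (Function.support c).Finite)
    (hpaths : ∀ x, c x ≠ 0 → x ∈ E.paths) {x : E.V × List E.Edge} (hx : c x ≠ 0)
    (hx' : x.2 ≠ []) : E.IsCycleGraph := by
  choose l hl hcl using hc.forall_exists_ne_nil hconn hx hx'
  have hs_inj : Function.Injective E.s := fun e f h => Option.some_injective _ <|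
    (hc.head?_eq_of_s_eq (hcl _) (hl _) rfl).1.symm.trans
      (hc.head?_eq_of_s_eq (hcl _) (hl _) h.symm).1
  have hr_inj : Function.Injective E.r := fun e f h => Option.some_injective _ <|
    (hc.getLast?_eq_of_r_eq (hcl _) (hl _) rfl).1.symm.trans
      (hc.getLast?_eq_of_r_eq (hcl _) (hl _) h.symm).1
  have hs_surj : Function.Surjective E.s := fun u => by
    obtain ⟨e, t, ht⟩ := List.exists_cons_of_ne_nil (hl u)
    have hpath := hpaths _ (hcl u)
    rw [ht, cons_mem_paths] at hpath
    exact ⟨e, hpath.1⟩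
  have hr_surj : Function.Surjective E.r := fun u => by
    obtain ⟨e, he⟩ := Option.ne_none_iff_exists'.mp (mt List.getLast?_eq_none_iff.mp (hl u))
    exact ⟨e, (pathTarget_of_getLast?_eq he).symm.trans (hc.pathTarget_eq (hcl u))⟩
  have : Finite E.V := finite_of_forall_ne_zero hfin hcl
  have : Nonempty E.V := ⟨x.1⟩
  exact isCycleGraph_of_bijective hconn ⟨hs_inj, hs_surj⟩ ⟨hr_inj, hr_surj⟩

end

end DirGraph

theorem stmt7_general (K : Type) [Field K] (E : DirGraph) (hconn : E.IsConnectedGraph)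
    (hns : ¬ E.relCenter K ⊆ E.scalarSet K) :
    E.IsCycleGraph := by
  obtain ⟨z, hz, hzs⟩ := Set.not_subset.mp hns
  have hspan := DirGraph.mem_pathSpan_of_mem_KE hz.1
  have hc := DirGraph.isCentralCoeff_pathCoeff hz
  by_cases hnil : ∀ x, DirGraph.pathCoeff K E z x ≠ 0 → x.2 = []
  · exact absurd (DirGraph.mem_scalarSet_of_support_pathCoeff_nil hconn hspan hc hnil) hzs
  · obtain ⟨x, hx, hx'⟩ : ∃ x, DirGraph.pathCoeff K E z x ≠ 0 ∧ x.2 ≠ [] := by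
      simpa only [not_forall, exists_prop] using hnil
    exact DirGraph.isCycleGraph_of_isCentralCoeff hconn hc (DirGraph.finite_support_pathCoeff hspan)
      (fun _ => DirGraph.mem_paths_of_pathCoeff_ne_zero hspan) hx hx'

/-- If `E` is a (connected) graph with `0 ≠ Z(KE) ⊄ K·1`,
then `E` is a cycle. -/
theorem stmt7 (K : Type) [Field K] (E : DirGraph) (hconn : E.IsConnectedGraph)
    (hne : ∃ z ∈ E.relCenter K, z ≠ 0)
    (hns : ¬ E.relCenter K ⊆ E.scalarSet K) :
    E.IsCycleGraph :=
  stmt7_general K E hconn hns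
end
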